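/- Let f : G → G' be a non-injective homomorphism between finite groups and ⇝ any G'-transfer system. Then the pair (1, ker f) (trivial subgroup related to the kernel) lies in f⁻¹_R(⇝) but not in f⁻¹_L(⇝); in particular, f⁻¹_L(⇝) is strictly contained in f⁻¹_R(⇝). -/
import Mathlib


/-- Conjugation of a subgroup: `gKg⁻¹`. -/
def conjSub {G : Type*} [Group G] (g : G) (K : Subgroup G) : Subgroup G :=
  Subgroup.map (MulAut.conj g).toMonoidHom K

/-- A `G`-transfer system: a partial order on subgroups refining inclusion,
closed under conjugation and restriction. -/
def IsTransferSystem {G : Type*} [Group G] (R : Subgroup G → Subgroup G → Prop) : Prop :=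
  (∀ H, R H H) ∧
  (∀ ⦃K H⦄, R K H → R H K → K = H) ∧
  (∀ ⦃K J H⦄, R K J → R J H → R K H) ∧
  (∀ ⦃K H⦄, R K H → K ≤ H) ∧
  (∀ ⦃K H⦄ (g : G), R K H → R (conjSub g K) (conjSub g H)) ∧
  (∀ ⦃K H⦄, R K H → ∀ ⦃L⦄, L ≤ H → R (L ⊓ K) L)

/-- `TL` is the transfer system generated by the relation `R`:
the least transfer system containing `R`. -/
def IsGenBy {G : Type*} [Group G] (TL R : Subgroup G → Subgroup G → Prop) : Prop :=
  IsTransferSystem TL ∧ (∀ K H, R K H → TL K H) ∧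
    ∀ T, IsTransferSystem T → (∀ K H, R K H → T K H) → ∀ K H, TL K H → T K H

/-- The largest transfer system contained in the partial order
`K ≤ H ∧ W (f K) (f H)`, for an inclusion-preserving map `F` on subgroups. -/
def invRgen {G G' : Type*} [Group G] [Group G'] (F : Subgroup G → Subgroup G')
    (W : Subgroup G' → Subgroup G' → Prop) (K H : Subgroup G) : Prop :=
  K ≤ H ∧ ∀ (g : G) (L : Subgroup G), L ≤ conjSub g H →
    (conjSub g K ⊓ L ≤ L ∧ W (F (conjSub g K ⊓ L)) (F L))

lemma mem_conjSub {G : Type*} [Group G] {g x : G} {K : Subgroup G} :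
    x ∈ conjSub g K ↔ g⁻¹ * x * g ∈ K := by
  simp only [conjSub, Subgroup.mem_map, MulEquiv.coe_toMonoidHom, MulAut.conj_apply]
  constructor
  · rintro ⟨y, hy, rfl⟩; convert hy using 1; group
  · intro h; exact ⟨_, h, by group⟩

lemma conjSub_mono {G : Type*} [Group G] (g : G) {A B : Subgroup G} (h : A ≤ B) :
    conjSub g A ≤ conjSub g B := Subgroup.map_mono h

lemma conjSub_inf {G : Type*} [Group G] (g : G) (A B : Subgroup G) :
    conjSub g (A ⊓ B) = conjSub g A ⊓ conjSub g B := by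
  ext x; simp [mem_conjSub, Subgroup.mem_inf]

lemma conjSub_conjSub {G : Type*} [Group G] (g h : G) (K : Subgroup G) :
    conjSub g (conjSub h K) = conjSub (g * h) K := by
  ext x; simp [mem_conjSub, mul_assoc]

lemma conjSub_bot {G : Type*} [Group G] (g : G) : conjSub g (⊥ : Subgroup G) = ⊥ := by
  ext x
  simp only [mem_conjSub, Subgroup.mem_bot]
  constructor
  · intro h; have := congrArg (fun y => g * y * g⁻¹) h; simpa [mul_assoc] using this
  · rintro rfl; group

lemma conjSub_comap {G G' : Type*} [Group G] [Group G'] (f : G →* G') (g : G)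
    (K' : Subgroup G') : conjSub g (K'.comap f) = (conjSub (f g) K').comap f := by
  ext x; simp [mem_conjSub, Subgroup.mem_comap]

lemma conjSub_ker {G G' : Type*} [Group G] [Group G'] (f : G →* G') (g : G) :
    conjSub g f.ker = f.ker := by
  rw [← MonoidHom.comap_bot, conjSub_comap, conjSub_bot]

lemma map_comap_inf {G G' : Type*} [Group G] [Group G'] (f : G →* G')
    (K' : Subgroup G') (L : Subgroup G) :
    Subgroup.map f (K'.comap f ⊓ L) = K' ⊓ Subgroup.map f L := by
  ext y
  simp only [Subgroup.mem_map, Subgroup.mem_inf, Subgroup.mem_comap]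
  constructor
  · rintro ⟨x, ⟨h1, h2⟩, rfl⟩; exact ⟨h1, x, h2, rfl⟩
  · rintro ⟨h1, x, h2, rfl⟩; exact ⟨x, ⟨h1, h2⟩, rfl⟩

lemma invRgen_isTS {G G' : Type*} [Group G] [Group G'] (f : G →* G')
    {W : Subgroup G' → Subgroup G' → Prop} (hW : IsTransferSystem W) :
    IsTransferSystem (invRgen (Subgroup.map f) W) := by
  obtain ⟨Wrefl, -, Wtrans, -, -, -⟩ := hW
  refine ⟨?_, ?_, ?_, ?_, ?_, ?_⟩
  · intro H
    refine ⟨le_rfl, fun g L hL => ⟨inf_le_right, ?_⟩⟩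
    rw [inf_eq_right.2 hL]; exact Wrefl _
  · intro K H h1 h2; exact le_antisymm h1.1 h2.1
  · intro K J H hKJ hJH
    refine ⟨hKJ.1.trans hJH.1, fun g L hL => ?_⟩
    have h1 := hJH.2 g L hL
    have h2 := hKJ.2 g (conjSub g J ⊓ L) inf_le_left
    have e : conjSub g K ⊓ (conjSub g J ⊓ L) = conjSub g K ⊓ L := by
      rw [← inf_assoc, inf_eq_left.2 (conjSub_mono g hKJ.1)]
    rw [e] at h2
    exact ⟨inf_le_right, Wtrans h2.2 h1.2⟩
  · intro K H h; exact h.1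
  · intro K H g0 h
    refine ⟨conjSub_mono g0 h.1, fun g L hL => ?_⟩
    rw [conjSub_conjSub] at hL ⊢
    exact h.2 (g * g0) L hL
  · intro K H h L0 hL0
    refine ⟨inf_le_left, fun g L hL => ?_⟩
    have h2 := h.2 g L (hL.trans (conjSub_mono g hL0))
    have e : conjSub g (L0 ⊓ K) ⊓ L = conjSub g K ⊓ L := by
      rw [conjSub_inf, inf_assoc, inf_eq_right.2 (inf_le_right.trans hL : conjSub g K ⊓ L ≤ conjSub g L0)]
    rw [e]
    exact ⟨inf_le_right, h2.2⟩

lemma gen_le_invRgen {G G' : Type*} [Group G] [Group G'] (f : G →* G')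
    {W : Subgroup G' → Subgroup G' → Prop} (hW : IsTransferSystem W)
    {K' H' : Subgroup G'} (hW' : W K' H') :
    invRgen (Subgroup.map f) W (K'.comap f) (H'.comap f) := by
  obtain ⟨-, -, -, Wle, Wconj, Wres⟩ := hW
  refine ⟨Subgroup.comap_mono (Wle hW'), fun g L hL => ?_⟩
  rw [conjSub_comap] at hL ⊢
  refine ⟨inf_le_right, ?_⟩
  rw [map_comap_inf]
  have hmapL : Subgroup.map f L ≤ conjSub (f g) H' :=
    (Subgroup.map_le_iff_le_comap).2 hL
  have := Wres (Wconj (f g) hW') hmapL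
  rwa [inf_comm] at this

theorem stmt11 {G G' : Type*} [Group G] [Group G'] [Finite G] [Finite G']
    (f : G →* G') (hf : ¬ Function.Injective f)
    (W : Subgroup G' → Subgroup G' → Prop) (hW : IsTransferSystem W)
    (TL : Subgroup G → Subgroup G → Prop)
    (hTL : IsGenBy TL (fun A B => ∃ K' H' : Subgroup G', W K' H' ∧
      A = K'.comap f ∧ B = H'.comap f)) :
    invRgen (Subgroup.map f) W ⊥ f.ker ∧ ¬ TL ⊥ f.ker ∧
    (∀ K H, TL K H → invRgen (Subgroup.map f) W K H) ∧
    TL ≠ invRgen (Subgroup.map f) W := by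
  obtain ⟨Wrefl, -, -, Wle, -, -⟩ := id hW
  have part1 : invRgen (Subgroup.map f) W ⊥ f.ker := by
    refine ⟨bot_le, fun g L hL => ?_⟩
    rw [conjSub_bot, bot_inf_eq]
    refine ⟨bot_le, ?_⟩
    rw [conjSub_ker] at hL
    have hLbot : Subgroup.map f L = ⊥ := by
      rw [← le_bot_iff, ← MonoidHom.comap_bot] at *
      exact (Subgroup.map_le_iff_le_comap).2 hL
    rw [Subgroup.map_bot, hLbot]
    exact Wrefl _
  have part2 : ¬ TL ⊥ f.ker := by
    intro hcontra
    set T : Subgroup G → Subgroup G → Prop := fun K H => K ≤ H ∧ f.ker ⊓ H ≤ K with hT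
    have hTS : IsTransferSystem T := by
      refine ⟨fun H => ⟨le_rfl, inf_le_right⟩, fun K H h1 h2 => le_antisymm h1.1 h2.1,
        ?_, fun K H h => h.1, ?_, ?_⟩
      · intro K J H h1 h2
        exact ⟨h1.1.trans h2.1, (le_inf inf_le_left h2.2).trans h1.2⟩
      · intro K H g h
        refine ⟨conjSub_mono g h.1, ?_⟩
        rw [← conjSub_ker f g, ← conjSub_inf]
        exact conjSub_mono g h.2
      · intro K H h L0 hL0
        exact ⟨inf_le_left, le_inf inf_le_right ((inf_le_inf_left _ hL0).trans h.2)⟩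
    have hgen : ∀ K H, (∃ K' H' : Subgroup G', W K' H' ∧
        K = K'.comap f ∧ H = H'.comap f) → T K H := by
      rintro _ _ ⟨K', H', hW', rfl, rfl⟩
      refine ⟨Subgroup.comap_mono (Wle hW'), inf_le_left.trans ?_⟩
      rw [← MonoidHom.comap_bot]
      exact Subgroup.comap_mono bot_le
    have hbk : T ⊥ f.ker := hTL.2.2 T hTS hgen ⊥ f.ker hcontra
    have : f.ker = ⊥ := le_bot_iff.1 (by simpa using hbk.2)
    exact hf ((MonoidHom.ker_eq_bot_iff f).1 this)
  have part3 : ∀ K H, TL K H → invRgen (Subgroup.map f) W K H := by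
    refine hTL.2.2 _ (invRgen_isTS f hW) ?_
    rintro _ _ ⟨K', H', hW', rfl, rfl⟩
    exact gen_le_invRgen f hW hW'
  refine ⟨part1, part2, part3, fun heq => part2 ?_⟩
  rw [heq]; exact part1
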